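/- Let c be a circle-count function and T : (Fin n → Bool) → ℕ any function. The coefficient of A^{−n − 2(c(S_B) − 1)} in the bracket ⟨n, c, T⟩ equals the polynomial ∑_{σ B-minimal} (−1)^{c(σ)−1} · t^{T(σ)} in ℤ[t], the sum over all B-minimal states σ. -/

import Mathlib

open LaurentPolynomial Polynomial Finset

/-- `aC σ` is the number of A-smoothings of the state `σ`, i.e. the number of
coordinates where `σ` takes the value `true`. -/
def aC {n : ℕ} (σ : Fin n → Bool) : ℕ := (Finset.univ.filter fun i => σ i = true).card

/-- `bC σ = n - aC σ` is the number of B-smoothings of the state `σ`. -/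
def bC {n : ℕ} (σ : Fin n → Bool) : ℕ := n - aC σ

/-- Two states are adjacent if they differ in exactly one coordinate. -/
def Adjacent {n : ℕ} (σ τ : Fin n → Bool) : Prop :=
  (Finset.univ.filter fun i => σ i ≠ τ i).card = 1

/-- `StateLE σ τ` iff `τ i = true` whenever `σ i = true`. -/
def StateLE {n : ℕ} (σ τ : Fin n → Bool) : Prop := ∀ i, σ i = true → τ i = true

/-- A circle-count function: `c σ ≥ 1` for all states and `|c σ - c τ| = 1`
for adjacent states. -/
def IsCircleCount {n : ℕ} (c : (Fin n → Bool) → ℕ) : Prop :=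
  (∀ σ, 1 ≤ c σ) ∧ ∀ σ τ, Adjacent σ τ → |(c σ : ℤ) - (c τ : ℤ)| = 1

/-- The all-A state: the constant-`true` state. -/
def SA (n : ℕ) : Fin n → Bool := fun _ => true

/-- The all-B state: the constant-`false` state. -/
def SB (n : ℕ) : Fin n → Bool := fun _ => false

/-- A state `σ` is A-maximal for `c` if `c σ = c S_A + b σ`. -/
def AMaximal {n : ℕ} (c : (Fin n → Bool) → ℕ) (σ : Fin n → Bool) : Prop :=
  c σ = c (SA n) + bC σ

/-- A state `σ` is B-minimal for `c` if `c σ = c S_B + a σ`. -/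
def BMinimal {n : ℕ} (c : (Fin n → Bool) → ℕ) (σ : Fin n → Bool) : Prop :=
  c σ = c (SB n) + aC σ

instance {n : ℕ} (c : (Fin n → Bool) → ℕ) : DecidablePred (AMaximal c) :=
  fun σ => inferInstanceAs (Decidable (c σ = c (SA n) + bC σ))

instance {n : ℕ} (c : (Fin n → Bool) → ℕ) : DecidablePred (BMinimal c) :=
  fun σ => inferInstanceAs (Decidable (c σ = c (SB n) + aC σ))

/-- The contribution `A^{a(σ)-b(σ)} (−A²−A⁻²)^{c(σ)-1} t^{T(σ)}` of the state `σ`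
to the Kauffman bracket; a Laurent polynomial in `A` over `ℤ[t]`, where `A` is the
Laurent variable `LaurentPolynomial.T 1` and `t` is `Polynomial.X`. -/
noncomputable def contrib {n : ℕ} (c T : (Fin n → Bool) → ℕ) (σ : Fin n → Bool) :
    LaurentPolynomial (Polynomial ℤ) :=
  LaurentPolynomial.T ((aC σ : ℤ) - (bC σ : ℤ)) *
    (-(LaurentPolynomial.T 2) - LaurentPolynomial.T (-2)) ^ (c σ - 1) *
    LaurentPolynomial.C (Polynomial.X ^ T σ)

/-- The Kauffman bracket state sum `⟨n, c, T⟩`. -/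
noncomputable def bracket (n : ℕ) (c T : (Fin n → Bool) → ℕ) :
    LaurentPolynomial (Polynomial ℤ) :=
  ∑ σ : Fin n → Bool, contrib c T σ

/-- The coefficient of `A^j` in a Laurent polynomial over `ℤ[t]`. -/
noncomputable def coeffA (P : LaurentPolynomial (Polynomial ℤ)) (j : ℤ) : Polynomial ℤ := P.coeff j

/-- The largest exponent of `A` with nonzero coefficient (junk value `0` for `P = 0`). -/
noncomputable def maxdeg (P : LaurentPolynomial (Polynomial ℤ)) : ℤ := WithBot.unbotD 0 P.coeff.support.max

/-- The smallest exponent of `A` with nonzero coefficient (junk value `0` for `P = 0`). -/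
noncomputable def mindeg (P : LaurentPolynomial (Polynomial ℤ)) : ℤ := WithTop.untopD 0 P.coeff.support.min

/-- `spanDeg P = maxdeg P - mindeg P`. -/
noncomputable def spanDeg (P : LaurentPolynomial (Polynomial ℤ)) : ℤ := maxdeg P - mindeg P

lemma aC_le {n : ℕ} (σ : Fin n → Bool) : aC σ ≤ n := by
  simpa [aC] using Finset.card_filter_le Finset.univ (fun i => σ i = true)

lemma c_le_aux {n : ℕ} (c : (Fin n → Bool) → ℕ) (hc : IsCircleCount c) :
    ∀ m (σ : Fin n → Bool), aC σ = m → c σ ≤ c (SB n) + aC σ := by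
  intro m
  induction m with
  | zero =>
    intro σ hm
    have hσ : σ = SB n := by
      funext i
      cases h : σ i
      · rfl
      · exfalso
        have hmem : i ∈ Finset.univ.filter fun j => σ j = true := by simp [h]
        have := Finset.card_pos.mpr ⟨i, hmem⟩
        simp only [aC] at hm
        omega
    simp [hσ]
  | succ m ih =>
    intro σ hm
    have hpos : 0 < (Finset.univ.filter fun i => σ i = true).card := by
      simp only [aC] at hm; omega
    obtain ⟨i, hi⟩ := Finset.card_pos.mp hpos
    simp only [Finset.mem_filter] at hi
    set τ := Function.update σ i false with hτ
    have hfilter : (Finset.univ.filter fun j => τ j = true)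
        = (Finset.univ.filter fun j => σ j = true).erase i := by
      ext j
      by_cases hji : j = i <;>
        simp [hτ, Function.update, hji, hi.2]
    have haτ : aC τ = m := by
      have := Finset.card_erase_of_mem (by simp [hi.2] : i ∈ Finset.univ.filter fun j => σ j = true)
      simp only [aC, hfilter, this]
      simp only [aC] at hm
      omega
    have hadj : Adjacent σ τ := by
      unfold Adjacent
      have : (Finset.univ.filter fun j => σ j ≠ τ j) = {i} := by
        ext j
        by_cases hji : j = i <;>
          simp [hτ, Function.update, hji, hi.2]
      rw [this, Finset.card_singleton]
    have habs := hc.2 σ τ hadj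
    have h1 : (c σ : ℤ) ≤ c τ + 1 := by
      rcases abs_eq (by norm_num : (0:ℤ) ≤ 1) |>.mp habs with h | h <;> omega
    have h2 := ih τ haτ
    have hm' : aC σ = m + 1 := hm
    rw [haτ] at h2
    omega

lemma c_le {n : ℕ} (c : (Fin n → Bool) → ℕ) (hc : IsCircleCount c) (σ : Fin n → Bool) :
    c σ ≤ c (SB n) + aC σ := c_le_aux c hc (aC σ) σ rfl

lemma contrib_expand {n : ℕ} (c T : (Fin n → Bool) → ℕ) (σ : Fin n → Bool) :
    contrib c T σ = ∑ i ∈ Finset.range (c σ - 1 + 1),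
      LaurentPolynomial.C (((-1 : Polynomial ℤ) ^ (c σ - 1) * ((c σ - 1).choose i : Polynomial ℤ))
          * Polynomial.X ^ T σ) *
        LaurentPolynomial.T (((aC σ : ℤ) - (bC σ : ℤ)) + (2 * i - 2 * ((c σ - 1 - i) : ℕ))) := by
  set k := c σ - 1 with hk
  rw [contrib]
  rw [show (-(LaurentPolynomial.T 2) - LaurentPolynomial.T (-2) : LaurentPolynomial (Polynomial ℤ))
      = (-1) * (LaurentPolynomial.T 2 + LaurentPolynomial.T (-2)) by ring]
  rw [mul_pow, add_pow, Finset.mul_sum, Finset.mul_sum, Finset.sum_mul]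
  refine Finset.sum_congr rfl fun i hi => ?_
  rw [LaurentPolynomial.T_pow, LaurentPolynomial.T_pow, ← LaurentPolynomial.T_add,
    show ((i:ℤ)*2 + ((k - i : ℕ):ℤ)*(-2)) = 2*(i:ℤ) - 2*((k - i : ℕ):ℤ) by ring,
    LaurentPolynomial.T_add]
  simp only [map_mul, map_pow, map_neg, map_one, map_natCast]
  ring


lemma contrib_coeff {n : ℕ} (c T : (Fin n → Bool) → ℕ) (hc : IsCircleCount c) (σ : Fin n → Bool) :
    (contrib c T σ).coeff (-(n : ℤ) - 2 * ((c (SB n) : ℤ) - 1)) =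
      if BMinimal c σ then (-1) ^ (c σ - 1) * Polynomial.X ^ T σ else 0 := by
  have ha := aC_le σ
  have hle := c_le c hc σ
  have h1 := hc.1 σ
  have hb : bC σ = n - aC σ := rfl
  rw [contrib_expand, AddMonoidAlgebra.coeff_sum, Finset.sum_apply']
  simp only [← LaurentPolynomial.single_eq_C_mul_T, AddMonoidAlgebra.coeff_single, Finsupp.single_apply]
  by_cases hB : BMinimal c σ
  · rw [if_pos hB]
    have hBeq : c σ = c (SB n) + aC σ := hB
    rw [Finset.sum_eq_single 0]
    · rw [if_pos (by push_cast; omega), Nat.choose_zero_right]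
      push_cast
      ring
    · intro i hi hne
      rw [if_neg]
      intro hcond
      have hik : i ≤ c σ - 1 := by simpa using Nat.lt_succ_iff.mp (Finset.mem_range.mp hi)
      push_cast at hcond
      omega
    · intro h0
      exact absurd (Finset.mem_range.mpr (Nat.succ_pos _)) h0
  · rw [if_neg hB]
    apply Finset.sum_eq_zero
    intro i hi
    rw [if_neg]
    intro hcond
    have hik : i ≤ c σ - 1 := by simpa using Nat.lt_succ_iff.mp (Finset.mem_range.mp hi)
    push_cast at hcond
    exact hB (by unfold BMinimal; omega)


/-- The coefficient of `A^{−n − 2(c S_B − 1)}` in the bracket is the sum of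
`(−1)^{c σ − 1} t^{T σ}` over all B-minimal states `σ`. -/
theorem stmt11 {n : ℕ} (c : (Fin n → Bool) → ℕ) (hc : IsCircleCount c)
    (T : (Fin n → Bool) → ℕ) :
    coeffA (bracket n c T) (-(n : ℤ) - 2 * ((c (SB n) : ℤ) - 1)) =
      ∑ σ ∈ Finset.univ.filter (fun σ => BMinimal c σ),
        (-1) ^ (c σ - 1) * Polynomial.X ^ T σ := by
  rw [coeffA, bracket, AddMonoidAlgebra.coeff_sum, Finset.sum_apply']
  rw [Finset.sum_filter]
  exact Finset.sum_congr rfl fun σ _ => contrib_coeff c T hc σ
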